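/- arXiv:1404.1401 — 4 statements merged into one kernel-verified Lean document; each statement's English description precedes it below -/
import Mathlib

section
/- Let m > 0 and let p = (p⁰, p⃗) ∈ M_ℂ be a point of the complexified mass shell. Then |Im p⁰| ≤ |Im p⃗|, and moreover |Im p⃗| ≤ |Im p| ≤ √2 · |Im p⃗|. -/
open Matrix MeasureTheory
open scoped BigOperators Pointwise ComplexOrder ENNReal NNReal

noncomputable section

/-- Euclidean norm on `ℂ⁴`. -/
def enorm4 (p : Fin 4 → ℂ) : ℝ := Real.sqrt (∑ i, ‖p i‖ ^ 2)

/-- Euclidean norm on `ℂ³`. -/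
def enorm3 (p : Fin 3 → ℂ) : ℝ := Real.sqrt (∑ i, ‖p i‖ ^ 2)

/-- Euclidean norm of the (componentwise) imaginary part of a vector in `ℂ⁴`. -/
def imNorm4 (p : Fin 4 → ℂ) : ℝ := Real.sqrt (∑ i, (p i).im ^ 2)

/-- Euclidean norm of the (componentwise) imaginary part of a vector in `ℂ³`. -/
def imNorm3 (p : Fin 3 → ℂ) : ℝ := Real.sqrt (∑ i, (p i).im ^ 2)

/-- The spatial part `p⃗` of a four-vector `p = (p⁰, p⃗)`. -/
def spat (p : Fin 4 → ℂ) : Fin 3 → ℂ := fun i => p i.succ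

/-- The complexified mass shell `M_ℂ = {p ∈ ℂ⁴ | (p⁰)² - (p¹)² - (p²)² - (p³)² = m²}`. -/
def MassShellC (m : ℝ) : Set (Fin 4 → ℂ) :=
  {p | p 0 ^ 2 - p 1 ^ 2 - p 2 ^ 2 - p 3 ^ 2 = (m : ℂ) ^ 2}

/-! Write `p⁰ = a + i b` and `p⃗ = u + i v` with `u v ∈ ℝ³`. The mass-shell equation splits into
`a² - b² = m² + |u|² - |v|²` and `a b = u · v`. If `b² > |v|²`, the first gives `a² > |u|²`, and then
`a² b² > |u|² |v|² ≥ (u · v)²` by Cauchy–Schwarz, contradicting the second. The remaining bounds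
follow from `|Im p|² = b² + |v|²`. -/

open RealInnerProductSpace in
theorem sq_le_norm_sq_of_mul_eq_inner {E : Type*} [NormedAddCommGroup E] [InnerProductSpace ℝ E]
    {a b : ℝ} {u v : E} (hre : ‖u‖ ^ 2 - ‖v‖ ^ 2 ≤ a ^ 2 - b ^ 2) (him : a * b = ⟪u, v⟫) :
    b ^ 2 ≤ ‖v‖ ^ 2 := by
  by_contra! hv
  have hb : 0 < b ^ 2 := (sq_nonneg _).trans_lt hv
  have hu : ‖u‖ ^ 2 < a ^ 2 := by linarith
  have hcs : (a * b) ^ 2 ≤ ‖u‖ ^ 2 * ‖v‖ ^ 2 := by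
    rw [him, ← mul_pow]
    exact sq_le_sq' (neg_le_of_abs_le (abs_real_inner_le_norm u v)) (real_inner_le_norm u v)
  have hlt : ‖u‖ ^ 2 * ‖v‖ ^ 2 < a ^ 2 * b ^ 2 :=
    calc ‖u‖ ^ 2 * ‖v‖ ^ 2 ≤ ‖u‖ ^ 2 * b ^ 2 := by gcongr
      _ < a ^ 2 * b ^ 2 := by gcongr
  linarith [mul_pow a b 2]

theorem re_sq_sub_im_sq_of_mem_massShellC {m : ℝ} {p : Fin 4 → ℂ} (hp : p ∈ MassShellC m) :
    (p 0).re ^ 2 - (p 0).im ^ 2 = m ^ 2 + ∑ i, ((spat p i).re ^ 2 - (spat p i).im ^ 2) := by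
  have := congrArg Complex.re hp
  simp only [pow_two, Complex.sub_re, Complex.mul_re, Complex.ofReal_re, Complex.ofReal_im,
    mul_zero, sub_zero, spat, Finset.sum_sub_distrib, Fin.sum_univ_three, Fin.succ_zero_eq_one,
    Fin.succ_one_eq_two, Fin.reduceSucc] at this ⊢
  linarith

theorem re_mul_im_of_mem_massShellC {m : ℝ} {p : Fin 4 → ℂ} (hp : p ∈ MassShellC m) :
    (p 0).re * (p 0).im = ∑ i, (spat p i).re * (spat p i).im := by
  have := congrArg Complex.im hp
  simp only [pow_two, Complex.sub_im, Complex.mul_im, Complex.ofReal_re, Complex.ofReal_im,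
    mul_zero, zero_mul, add_zero, spat, Fin.sum_univ_three, Fin.succ_zero_eq_one,
    Fin.succ_one_eq_two, Fin.reduceSucc] at this ⊢
  linarith

theorem im_sq_le_of_mem_massShellC {m : ℝ} {p : Fin 4 → ℂ} (hp : p ∈ MassShellC m) :
    (p 0).im ^ 2 ≤ ∑ i, (spat p i).im ^ 2 := by
  let u : EuclideanSpace ℝ (Fin 3) := WithLp.toLp 2 fun i => (spat p i).re
  let v : EuclideanSpace ℝ (Fin 3) := WithLp.toLp 2 fun i => (spat p i).im
  have hu : ‖u‖ ^ 2 = ∑ i, (spat p i).re ^ 2 := EuclideanSpace.real_norm_sq_eq u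
  have hv : ‖v‖ ^ 2 = ∑ i, (spat p i).im ^ 2 := EuclideanSpace.real_norm_sq_eq v
  have huv : inner ℝ u v = ∑ i, (spat p i).re * (spat p i).im := by
    simp [u, v, EuclideanSpace.inner_toLp_toLp, dotProduct, mul_comm]
  rw [← hv]
  refine sq_le_norm_sq_of_mul_eq_inner (a := (p 0).re) (u := u) ?_ ?_
  · rw [hu, hv, re_sq_sub_im_sq_of_mem_massShellC hp, ← Finset.sum_sub_distrib]
    linarith [sq_nonneg m]
  · rw [huv, re_mul_im_of_mem_massShellC hp]

theorem imNorm4_sq (p : Fin 4 → ℂ) : imNorm4 p ^ 2 = (p 0).im ^ 2 + imNorm3 (spat p) ^ 2 := by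
  rw [imNorm4, imNorm3, Real.sq_sqrt (by positivity), Real.sq_sqrt (by positivity),
    Fin.sum_univ_succ]
  rfl

theorem massShell_im_bounds_general (m : ℝ) (p : Fin 4 → ℂ)
    (hp : p ∈ MassShellC m) :
    |(p 0).im| ≤ imNorm3 (spat p) ∧
      imNorm3 (spat p) ≤ imNorm4 p ∧ imNorm4 p ≤ Real.sqrt 2 * imNorm3 (spat p) := by
  have hsq : (p 0).im ^ 2 ≤ imNorm3 (spat p) ^ 2 := by
    rw [imNorm3, Real.sq_sqrt (by positivity)]
    exact im_sq_le_of_mem_massShellC hp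
  have hspat_nonneg : 0 ≤ imNorm3 (spat p) := Real.sqrt_nonneg _
  have hfull_nonneg : 0 ≤ imNorm4 p := Real.sqrt_nonneg _
  refine ⟨abs_le_of_sq_le_sq hsq hspat_nonneg, ?_, ?_⟩
  · rw [← sq_le_sq₀ hspat_nonneg hfull_nonneg, imNorm4_sq]
    linarith [sq_nonneg (p 0).im]
  · rw [← sq_le_sq₀ hfull_nonneg (by positivity), imNorm4_sq, mul_pow, Real.sq_sqrt zero_le_two]
    linarith

/-- Geometric properties of the complexified mass shell, part 1
(Lemma: `|Im p⁰| ≤ |Im p⃗|` and `|Im p⃗| ≤ |Im p| ≤ √2 |Im p⃗|`). -/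
theorem massShell_im_bounds (m : ℝ) (hm : 0 < m) (p : Fin 4 → ℂ)
    (hp : p ∈ MassShellC m) :
    |(p 0).im| ≤ imNorm3 (spat p) ∧
      imNorm3 (spat p) ≤ imNorm4 p ∧ imNorm4 p ≤ Real.sqrt 2 * imNorm3 (spat p) :=
  massShell_im_bounds_general m p hp
end
end

section
/- For every m > 0 and every ε > 0 there exists a constant C = C(ε, m) > 0 such that for all p = (p⁰, p⃗) ∈ M_ℂ one has max(m, |p⃗|) ≤ C · max(m/12, |p⁰|) · e^{ε|Im p⃗|}. -/
open Matrix MeasureTheory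
open scoped BigOperators Pointwise ComplexOrder ENNReal NNReal

noncomputable section

/-!
Write `p⃗ = x + i y` with `x, y` real. Taking real parts in `(p⁰)² = m² + p⃗ · p⃗` gives
`m² + |x|² - |y|² ≤ |p⁰|²`, hence `|p⃗| ≤ |p⁰| + √2 |y|`. The linear term `√2 |y|` is absorbed
by `e^{ε|y|} ≥ ε|y|`, and `m ≤ 12 · max(m/12, |p⁰|)` handles the rest.
-/

theorem Complex.sq_norm_eq_re_sq_add (z : ℂ) : ‖z‖ ^ 2 = (z ^ 2).re + 2 * z.im ^ 2 := by
  rw [Complex.sq_norm, Complex.normSq_apply, sq, Complex.mul_re]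
  ring

theorem sq_enorm3 (q : Fin 3 → ℂ) : enorm3 q ^ 2 = ∑ i, ‖q i‖ ^ 2 :=
  Real.sq_sqrt (by positivity)

theorem sq_imNorm3 (q : Fin 3 → ℂ) : imNorm3 q ^ 2 = ∑ i, (q i).im ^ 2 :=
  Real.sq_sqrt (by positivity)

theorem sq_enorm3_eq_re_sum_sq_add (q : Fin 3 → ℂ) :
    enorm3 q ^ 2 = (∑ i, q i ^ 2).re + 2 * imNorm3 q ^ 2 := by
  simp only [sq_enorm3, sq_imNorm3, Complex.sq_norm_eq_re_sq_add, Finset.sum_add_distrib,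
    Complex.re_sum, Finset.mul_sum]

theorem sq_eq_of_mem_massShellC {m : ℝ} {p : Fin 4 → ℂ} (hp : p ∈ MassShellC m) :
    p 0 ^ 2 = (m : ℂ) ^ 2 + ∑ i, spat p i ^ 2 := by
  rw [Fin.sum_univ_three]
  change p 0 ^ 2 = _ + (p 1 ^ 2 + p 2 ^ 2 + p 3 ^ 2)
  have h : p 0 ^ 2 - p 1 ^ 2 - p 2 ^ 2 - p 3 ^ 2 = (m : ℂ) ^ 2 := hp
  linear_combination h

theorem sq_add_sq_enorm3_le_of_mem_massShellC {m : ℝ} {p : Fin 4 → ℂ} (hp : p ∈ MassShellC m) :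
    m ^ 2 + enorm3 (spat p) ^ 2 ≤ ‖p 0‖ ^ 2 + 2 * imNorm3 (spat p) ^ 2 := by
  have hre : (p 0 ^ 2).re = m ^ 2 + (∑ i, spat p i ^ 2).re := by
    rw [sq_eq_of_mem_massShellC hp, Complex.add_re, ← Complex.ofReal_pow, Complex.ofReal_re]
  rw [sq_enorm3_eq_re_sum_sq_add, Complex.sq_norm_eq_re_sq_add (p 0), hre]
  linarith [sq_nonneg (p 0).im]

theorem enorm3_spat_le_of_mem_massShellC {m : ℝ} {p : Fin 4 → ℂ} (hp : p ∈ MassShellC m) :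
    enorm3 (spat p) ≤ ‖p 0‖ + Real.sqrt 2 * imNorm3 (spat p) := by
  have hb : 0 ≤ imNorm3 (spat p) := Real.sqrt_nonneg _
  have hsq : enorm3 (spat p) ^ 2 ≤ (‖p 0‖ + Real.sqrt 2 * imNorm3 (spat p)) ^ 2 := by
    nlinarith [sq_add_sq_enorm3_le_of_mem_massShellC hp, Real.sq_sqrt (zero_le_two : (0 : ℝ) ≤ 2),
      mul_nonneg (mul_nonneg (norm_nonneg (p 0)) (Real.sqrt_nonneg 2)) hb]
  exact (pow_le_pow_iff_left₀ (Real.sqrt_nonneg _) (by positivity) two_ne_zero).1 hsq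

theorem max_add_mul_le_mul_exp {m ε κ a b : ℝ} (hm : 0 < m) (hε : 0 < ε) (hκ : 0 ≤ κ)
    (hb : 0 ≤ b) :
    max m (a + κ * b) ≤ 12 * (1 + κ / (ε * m)) * max (m / 12) a * Real.exp (ε * b) := by
  set M := max (m / 12) a
  set E := Real.exp (ε * b)
  have hmM : m ≤ 12 * M := by linarith [le_max_left (m / 12) a]
  have haM : a ≤ M := le_max_right _ _
  have hM : 0 < M := by linarith
  have hE : 1 ≤ E := Real.one_le_exp (by positivity)
  have hbE : ε * b ≤ E := by linarith [Real.add_one_le_exp (ε * b)]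
  have hME : M ≤ M * E := le_mul_of_one_le_right hM.le hE
  have hκb : κ * b ≤ κ / (ε * m) * (12 * M * E) := by
    calc κ * b = κ / ε * (ε * b) := by field_simp
      _ ≤ κ / ε * E := by gcongr
      _ = κ / (ε * m) * (m * E) := by field_simp
      _ ≤ κ / (ε * m) * (12 * M * E) := by gcongr
  have hκ' : 0 ≤ κ / (ε * m) * (12 * M * E) := by positivity
  rw [show 12 * (1 + κ / (ε * m)) * M * E = 12 * M * E + κ / (ε * m) * (12 * M * E) by ring]
  exact max_le (by linarith) (by linarith)

/-- Geometric properties of the complexified mass shell, part 3: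
`m ∨ |p⃗| ≤ C (m/12 ∨ |p⁰|) e^{ε|Im p⃗|}` with `C = C(ε, m)`. -/
theorem massShell_spatial_bound (m ε : ℝ) (hm : 0 < m) (hε : 0 < ε) :
    ∃ C > 0, ∀ p ∈ MassShellC m,
      max m (enorm3 (spat p)) ≤ C * max (m / 12) ‖p 0‖ * Real.exp (ε * imNorm3 (spat p)) := by
  refine ⟨12 * (1 + Real.sqrt 2 / (ε * m)), by positivity, fun p hp => ?_⟩
  calc max m (enorm3 (spat p))
      ≤ max m (‖p 0‖ + Real.sqrt 2 * imNorm3 (spat p)) :=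
        max_le_max le_rfl (enorm3_spat_le_of_mem_massShellC hp)
    _ ≤ _ := max_add_mul_le_mul_exp hm hε (Real.sqrt_nonneg 2) (Real.sqrt_nonneg _)
end
end

section
/- Let m > 0 and let p = (p⁰, p⃗) ∈ M_ℂ with |p⁰| ≤ m/12. Then there exists a map k = (k⁰, k⃗) : ℂ → ℂ⁴, holomorphic on an open neighborhood of the closed unit disc Δ̄ = {t ∈ ℂ : |t| ≤ 1}, such that k(t) ∈ M_ℂ for all t ∈ Δ̄, k(0) = p, |k⃗(t) − p⃗| ≤ m/6 for all t ∈ Δ̄, and |k⁰(t)| ≥ m/12 for all t with |t| = 1. -/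
/-! Since `|p⁰| ≤ m/12`, the shell equation `(p¹)² + (p²)² + (p³)² = (p⁰)² - m²` forces some
spatial component to satisfy `|pʲ| ≥ m/2`. The disc is the complex Lorentz boost in the
`(0, j)`-plane with rapidity `α t`, `α = m / (5 pʲ)`: it preserves `M_ℂ`, changes `p⃗` only in
`pʲ ↦ pʲ cosh (α t) + p⁰ sinh (α t)`, and makes the time component
`p⁰ cosh (α t) + pʲ sinh (α t) ≈ (m/5) t`. The errors are controlled by `|cosh z - 1| ≤ |z|²` and
`|sinh z - z| ≤ |z|³/5`, since `|α t| ≤ 2/5` on the closed disc. -/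

open Matrix MeasureTheory
open scoped BigOperators Pointwise ComplexOrder ENNReal NNReal

noncomputable section

namespace Complex

lemma norm_cosh_sub_one_le {z : ℂ} (hz : ‖z‖ ≤ 1) : ‖cosh z - 1‖ ≤ ‖z‖ ^ 2 := by
  have hpos := norm_exp_sub_one_sub_id_le hz
  have hneg := norm_exp_sub_one_sub_id_le (x := -z) (by rwa [norm_neg])
  rw [norm_neg] at hneg
  calc ‖cosh z - 1‖ = ‖(exp z - 1 - z) + (exp (-z) - 1 - -z)‖ / 2 := by
        rw [cosh, ← RCLike.norm_ofNat (K := ℂ) 2, ← norm_div]; ring_nf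
    _ ≤ ‖z‖ ^ 2 := by linarith [norm_add_le (exp z - 1 - z) (exp (-z) - 1 - -z)]

lemma norm_sinh_sub_self_le {z : ℂ} (hz : ‖z‖ ≤ 1) : ‖sinh z - z‖ ≤ ‖z‖ ^ 3 / 5 := by
  have hsin := sin_bound (x := z * I) (by simpa using hz)
  rw [sin_mul_I, norm_mul, norm_I, mul_one] at hsin
  have hz3 : ‖z‖ ^ 5 ≤ ‖z‖ ^ 3 := pow_le_pow_of_le_one (norm_nonneg z) hz (by norm_num)
  calc ‖sinh z - z‖ = ‖(sinh z * I - (z * I - (z * I) ^ 3 / 6)) + z ^ 3 / 6 * I‖ := by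
        rw [← mul_one ‖sinh z - z‖, ← norm_I, ← norm_mul]
        congr 1
        linear_combination (-(z ^ 3 / 6 * I)) * I_sq
    _ ≤ ‖z‖ ^ 5 / 100 + ‖z‖ ^ 3 / 6 := by
        refine (norm_add_le _ _).trans (add_le_add hsin (le_of_eq ?_)); simp
    _ ≤ ‖z‖ ^ 3 / 5 := by linarith [pow_nonneg (norm_nonneg z) 3]

end Complex

section HyperbolicRotation

open Complex

variable {m : ℝ} {a s z : ℂ}

lemma norm_mul_cosh_add_mul_sinh_sub_le (ha : ‖a‖ ≤ m / 12) (hz : ‖z‖ ≤ 2 / 5)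
    (hsz : ‖s‖ * ‖z‖ ≤ m / 5) : ‖s * cosh z + a * sinh z - s‖ ≤ m / 6 := by
  have hz1 : ‖z‖ ≤ 1 := by linarith
  have hr2 : ‖z‖ ^ 2 ≤ 4 / 25 := by nlinarith [norm_nonneg z]
  have hsinh : ‖sinh z‖ ≤ 6 / 5 * ‖z‖ := by
    have hr3 : ‖z‖ ^ 3 ≤ 4 / 25 * ‖z‖ := by
      nlinarith [mul_le_mul_of_nonneg_left hr2 (norm_nonneg z)]
    linarith [norm_le_norm_add_norm_sub' (sinh z) z, norm_sinh_sub_self_le hz1, norm_nonneg z]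
  have hscosh : ‖s * (cosh z - 1)‖ ≤ ‖s‖ * ‖z‖ ^ 2 := by
    rw [norm_mul]; gcongr; exact norm_cosh_sub_one_le hz1
  have hasinh : ‖a * sinh z‖ ≤ m / 12 * (6 / 5 * ‖z‖) := by
    rw [norm_mul]; gcongr; linarith [norm_nonneg a]
  calc ‖s * cosh z + a * sinh z - s‖ = ‖s * (cosh z - 1) + a * sinh z‖ := by ring_nf
    _ ≤ ‖s‖ * ‖z‖ ^ 2 + m / 12 * (6 / 5 * ‖z‖) := norm_add_le_of_le hscosh hasinh
    _ ≤ m / 6 := by nlinarith [norm_nonneg a, norm_nonneg z, norm_nonneg s]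

lemma le_norm_mul_cosh_add_mul_sinh (ha : ‖a‖ ≤ m / 12) (hz : ‖z‖ ≤ 2 / 5)
    (hsz : ‖s‖ * ‖z‖ = m / 5) : m / 12 ≤ ‖a * cosh z + s * sinh z‖ := by
  have hz1 : ‖z‖ ≤ 1 := by linarith
  have hr2 : ‖z‖ ^ 2 ≤ 4 / 25 := by nlinarith [norm_nonneg z]
  have hcosh : ‖a * cosh z‖ ≤ m / 12 * (29 / 25) := by
    rw [norm_mul]; gcongr
    · linarith [norm_nonneg a]
    · linarith [norm_le_norm_add_norm_sub' (cosh z) 1, norm_one (α := ℂ),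
        norm_cosh_sub_one_le hz1]
  have hsinh : ‖s * (sinh z - z)‖ ≤ m / 5 * (4 / 125) := by
    calc ‖s * (sinh z - z)‖ ≤ ‖s‖ * (‖z‖ ^ 3 / 5) := by
          rw [norm_mul]; gcongr; exact norm_sinh_sub_self_le hz1
      _ = m / 5 * (‖z‖ ^ 2 / 5) := by rw [← hsz]; ring
      _ ≤ m / 5 * (4 / 125) :=
          mul_le_mul_of_nonneg_left (by linarith) (by rw [← hsz]; positivity)
  have hsplit : s * z = (a * cosh z + s * sinh z) + -(s * (sinh z - z)) + -(a * cosh z) := by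
    ring
  have := norm_add₃_le (a := a * cosh z + s * sinh z) (b := -(s * (sinh z - z)))
    (c := -(a * cosh z))
  rw [← hsplit, norm_neg, norm_neg, norm_mul, hsz] at this
  linarith [norm_nonneg (a * cosh z + s * sinh z)]

end HyperbolicRotation

section Boost

open Complex

/-- The complex Lorentz boost with rapidity `z` in the `(0, j + 1)`-plane. -/
def boost (j : Fin 3) (z : ℂ) (p : Fin 4 → ℂ) : Fin 4 → ℂ := fun i =>
  if i = 0 then p 0 * cosh z + p j.succ * sinh z
  else if i = j.succ then p j.succ * cosh z + p 0 * sinh z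
  else p i

variable (j : Fin 3) (z : ℂ) (p : Fin 4 → ℂ)

lemma boost_apply_zero : boost j z p 0 = p 0 * cosh z + p j.succ * sinh z := if_pos rfl

lemma boost_apply_succ_self : boost j z p j.succ = p j.succ * cosh z + p 0 * sinh z := by
  simp [boost, Fin.succ_ne_zero]

lemma boost_apply_succ_of_ne {i : Fin 3} (hi : i ≠ j) : boost j z p i.succ = p i.succ := by
  simp [boost, Fin.succ_ne_zero, hi]

lemma boost_zero : boost j 0 p = p := by
  ext i; by_cases h0 : i = 0 <;> by_cases hj : i = j.succ <;> simp [boost, h0, hj]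

lemma differentiable_boost : Differentiable ℂ fun z => boost j z p := by
  refine differentiable_pi.2 fun i => ?_
  unfold boost
  split_ifs <;> fun_prop

lemma spat_boost_sub :
    spat (boost j z p) - spat p = Pi.single j (boost j z p j.succ - p j.succ) := by
  ext i
  by_cases hi : i = j
  · subst hi; simp [spat]
  · simp [spat, hi, boost_apply_succ_of_ne j z p hi]

variable {j z p} in
lemma boost_mem_massShellC {m : ℝ} (hp : p ∈ MassShellC m) : boost j z p ∈ MassShellC m := by
  have hrot : boost j z p 0 ^ 2 - boost j z p j.succ ^ 2 = p 0 ^ 2 - p j.succ ^ 2 := by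
    rw [boost_apply_zero, boost_apply_succ_self]
    linear_combination (p 0 ^ 2 - p j.succ ^ 2) * cosh_sq_sub_sinh_sq z
  simp only [MassShellC, Set.mem_ofPred_eq] at hp ⊢
  fin_cases j <;> simp [boost] at hrot ⊢ <;> linear_combination hp + hrot

end Boost

lemma enorm3_single (j : Fin 3) (c : ℂ) : enorm3 (Pi.single j c) = ‖c‖ := by
  rw [enorm3, Fintype.sum_eq_single j fun i hi => by simp [hi], Pi.single_eq_same,
    Real.sqrt_sq (norm_nonneg c)]

lemma exists_le_norm_apply_succ_of_mem_massShellC {m : ℝ} {p : Fin 4 → ℂ} (hp : p ∈ MassShellC m)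
    (hp0 : ‖p 0‖ ≤ m / 2) : ∃ j : Fin 3, m / 2 ≤ ‖p j.succ‖ := by
  by_contra! hsmall
  have h1 : ‖p 1‖ < m / 2 := hsmall 0
  have h2 : ‖p 2‖ < m / 2 := hsmall 1
  have h3 : ‖p 3‖ < m / 2 := hsmall 2
  have hspat : (m : ℂ) ^ 2 - p 0 ^ 2 = -p 1 ^ 2 + -p 2 ^ 2 + -p 3 ^ 2 := by
    rw [← hp]; ring
  have hnorm : m ^ 2 - ‖p 0‖ ^ 2 ≤ ‖p 1‖ ^ 2 + ‖p 2‖ ^ 2 + ‖p 3‖ ^ 2 := calc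
    m ^ 2 - ‖p 0‖ ^ 2 = ‖(m : ℂ) ^ 2‖ - ‖p 0 ^ 2‖ := by simp
    _ ≤ ‖(m : ℂ) ^ 2 - p 0 ^ 2‖ := norm_sub_norm_le _ _
    _ ≤ ‖-p 1 ^ 2‖ + ‖-p 2 ^ 2‖ + ‖-p 3 ^ 2‖ := hspat ▸ norm_add₃_le
    _ = ‖p 1‖ ^ 2 + ‖p 2‖ ^ 2 + ‖p 3‖ ^ 2 := by simp only [norm_neg, norm_pow]
  nlinarith [norm_nonneg (p 0), norm_nonneg (p 1), norm_nonneg (p 2), norm_nonneg (p 3)]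

/-- Near the ramification set `{p⁰ = 0}` of the complexified mass shell there are
holomorphic discs keeping `p⃗` almost constant while moving `p⁰` away from `0`. -/
theorem massShell_holomorphic_disc (m : ℝ) (hm : 0 < m) (p : Fin 4 → ℂ)
    (hp : p ∈ MassShellC m) (hp0 : ‖p 0‖ ≤ m / 12) :
    ∃ k : ℂ → Fin 4 → ℂ, ∃ U : Set ℂ, IsOpen U ∧ Metric.closedBall (0 : ℂ) 1 ⊆ U ∧
      DifferentiableOn ℂ k U ∧
      (∀ t ∈ Metric.closedBall (0 : ℂ) 1, k t ∈ MassShellC m) ∧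
      k 0 = p ∧
      (∀ t ∈ Metric.closedBall (0 : ℂ) 1, enorm3 (spat (k t) - spat p) ≤ m / 6) ∧
      (∀ t : ℂ, ‖t‖ = 1 → m / 12 ≤ ‖k t 0‖) := by
  obtain ⟨j, hj⟩ := exists_le_norm_apply_succ_of_mem_massShellC hp (by linarith)
  have hpj : p j.succ ≠ 0 := norm_pos_iff.1 (by linarith)
  set α : ℂ := (m / 5 : ℝ) / p j.succ
  have hα : ‖p j.succ‖ * ‖α‖ = m / 5 := by
    rw [← norm_mul, mul_div_cancel₀ _ hpj, Complex.norm_real, Real.norm_of_nonneg (by linarith)]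
  have hαt : ∀ t : ℂ, ‖p j.succ‖ * ‖α * t‖ = m / 5 * ‖t‖ := fun t => by
    rw [norm_mul, ← mul_assoc, hα]
  have hαt_le : ∀ t : ℂ, ‖t‖ ≤ 1 → ‖α * t‖ ≤ 2 / 5 := fun t ht => by
    have hα_le : ‖α‖ ≤ 2 / 5 := by nlinarith [norm_nonneg α]
    rw [norm_mul]; nlinarith [norm_nonneg α, norm_nonneg t]
  refine ⟨fun t => boost j (α * t) p, Set.univ, isOpen_univ, Set.subset_univ _,
    ((differentiable_boost j p).comp (differentiable_id.const_mul α)).differentiableOn,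
    fun t _ => boost_mem_massShellC hp, by simp [boost_zero], fun t ht => ?_, fun t ht => ?_⟩
  · rw [mem_closedBall_zero_iff] at ht
    rw [spat_boost_sub, enorm3_single, boost_apply_succ_self]
    refine norm_mul_cosh_add_mul_sinh_sub_le hp0 (hαt_le t ht) ?_
    rw [hαt]; nlinarith
  · simp only [boost_apply_zero]
    exact le_norm_mul_cosh_add_mul_sinh hp0 (hαt_le t ht.le) (by rw [hαt, ht, mul_one])
end
end

section
/- Let m > 0 and for p⃗ ∈ ℝ³ put P₊(p⃗) = (p̸₊(p⃗) + m) γ⁰ / (2E(p⃗)) and P₋(p⃗) = −(p̸₋(p⃗) + m) γ⁰ / (2E(p⃗)). Then: (i) P₊(p⃗) + P₋(p⃗) = I₄ and P₊(p⃗)P₋(p⃗) = 0 for all p⃗; (ii) the map F_{3M} sending a pair (ψ₊, ψ₋) to the function p⃗ ↦ m(ψ₊(p⃗) − ψ₋(p⃗))/E(p⃗) is a unitary isomorphism from the Hilbert space H_M of (a.e.-equivalence classes of) pairs of measurable functions ψ₊, ψ₋ : ℝ³ → ℂ⁴ with P₊(p⃗)ψ₊(p⃗) = ψ₊(p⃗)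 and P₋(p⃗)ψ₋(p⃗) = ψ₋(p⃗) almost everywhere and squared norm m² ∫_{ℝ³} (|ψ₊(p⃗)|² + |ψ₋(p⃗)|²) E(p⃗)^{-2} d³p⃗ < ∞, onto L²(ℝ³, ℂ⁴); its inverse F_{M3} is given by φ ↦ ( (E/m)P₊φ , −(E/m)P₋φ ). -/
/-! With `αₖ = γ⁰γᵏ` and `β = γ⁰`, the free Dirac Hamiltonian `H(p⃗) = α·p⃗ + βm` satisfies
`(p̸ + m)γ⁰ = p⁰ + H(p⃗)` for every `p = (p⁰, p⃗)`, hence `P₊ = (E + H)/(2E)` and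
`P₋ = (E - H)/(2E) = 1 - P₊`. As `H` is Hermitian with `H² = E²`, these are complementary
orthogonal projections. So for each `p⃗`, `(x, y) ↦ (m/E)(x - y)` maps `ran P₊ ⊕ ran P₋`
isometrically, up to the weight `m²/E²`, onto `ℂ⁴`, with inverse `v ↦ ((E/m)P₊v, -(E/m)P₋v)`;
integrating over `p⃗` gives the unitary `F_{3M}`. -/

open Matrix MeasureTheory
open scoped BigOperators Pointwise ComplexOrder ENNReal NNReal

noncomputable section

/-- The Dirac gamma matrix `γ⁰` in the standard representation. -/
def γ0 : Matrix (Fin 4) (Fin 4) ℂ :=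
  !![1, 0, 0, 0; 0, 1, 0, 0; 0, 0, -1, 0; 0, 0, 0, -1]

/-- The Dirac gamma matrix `γ¹`. -/
def γ1 : Matrix (Fin 4) (Fin 4) ℂ :=
  !![0, 0, 0, 1; 0, 0, 1, 0; 0, -1, 0, 0; -1, 0, 0, 0]

/-- The Dirac gamma matrix `γ²`. -/
def γ2 : Matrix (Fin 4) (Fin 4) ℂ :=
  !![0, 0, 0, -Complex.I; 0, 0, Complex.I, 0; 0, Complex.I, 0, 0; -Complex.I, 0, 0, 0]

/-- The Dirac gamma matrix `γ³`. -/
def γ3 : Matrix (Fin 4) (Fin 4) ℂ :=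
  !![0, 0, 1, 0; 0, 0, 0, -1; -1, 0, 0, 0; 0, 1, 0, 0]

/-- The family `μ ↦ γ^μ`. -/
def gam : Fin 4 → Matrix (Fin 4) (Fin 4) ℂ := ![γ0, γ1, γ2, γ3]

/-- Feynman slash of a four-vector (with upper indices):
`p̸ = p⁰γ⁰ - p¹γ¹ - p²γ² - p³γ³`. -/
def slash (p : Fin 4 → ℂ) : Matrix (Fin 4) (Fin 4) ℂ :=
  p 0 • γ0 - p 1 • γ1 - p 2 • γ2 - p 3 • γ3

/-- Slash of a covector (lower indices): `A̸ = ∑ μ, A_μ γ^μ`. -/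
def slashLow (a : Fin 4 → ℂ) : Matrix (Fin 4) (Fin 4) ℂ := ∑ μ, a μ • gam μ

/-- Complexification of a real four-vector. -/
def cv4 (p : Fin 4 → ℝ) : Fin 4 → ℂ := fun μ => (p μ : ℂ)

/-- The relativistic energy `E(p⃗) = √(|p⃗|² + m²)`. -/
def Efun (m : ℝ) (q : Fin 3 → ℝ) : ℝ := Real.sqrt ((∑ i, q i ^ 2) + m ^ 2)

/-- The point `p₊(p⃗) = (E(p⃗), p⃗)` on the upper mass shell. -/
def pPlus (m : ℝ) (q : Fin 3 → ℝ) : Fin 4 → ℝ := Fin.cons (Efun m q) q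

/-- The point `p₋(p⃗) = (-E(p⃗), p⃗)` on the lower mass shell. -/
def pMinus (m : ℝ) (q : Fin 3 → ℝ) : Fin 4 → ℝ := Fin.cons (-Efun m q) q

/-- Minkowski inner product `px = p⁰x⁰ - p⃗·x⃗` of real four-vectors. -/
def mink (p x : Fin 4 → ℝ) : ℝ := p 0 * x 0 - (p 1 * x 1 + p 2 * x 2 + p 3 * x 3)

/-- The projection `P₊(p⃗) = (p̸₊(p⃗) + m)γ⁰/(2E(p⃗))`. -/
def Pplus (m : ℝ) (q : Fin 3 → ℝ) : Matrix (Fin 4) (Fin 4) ℂ :=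
  (2 * (Efun m q : ℂ))⁻¹ • ((slash (cv4 (pPlus m q)) + (m : ℂ) • 1) * γ0)

/-- The projection `P₋(p⃗) = -(p̸₋(p⃗) + m)γ⁰/(2E(p⃗))`. -/
def Pminus (m : ℝ) (q : Fin 3 → ℝ) : Matrix (Fin 4) (Fin 4) ℂ :=
  (-(2 * (Efun m q : ℂ))⁻¹) • ((slash (cv4 (pMinus m q)) + (m : ℂ) • 1) * γ0)

namespace Matrix

variable {n : Type*}

lemma isIdempotentElem_inv_two_smul_smul_one_add [Fintype n] [DecidableEq n] {H : Matrix n n ℂ}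
    {e : ℝ} (he : e ≠ 0) (hH : H * H = (e : ℂ) ^ 2 • 1) :
    IsIdempotentElem ((2 * (e : ℂ))⁻¹ • ((e : ℂ) • 1 + H)) := by
  simp only [IsIdempotentElem, add_mul, mul_add, hH, smul_mul_assoc, mul_smul_comm, one_mul,
    mul_one]
  match_scalars <;> field_simp <;> ring

lemma one_sub_inv_two_smul_smul_one_add [DecidableEq n] (H : Matrix n n ℂ) {e : ℝ} (he : e ≠ 0) :
    1 - (2 * (e : ℂ))⁻¹ • ((e : ℂ) • 1 + H) = (2 * (e : ℂ))⁻¹ • ((e : ℂ) • 1 - H) := by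
  match_scalars <;> field_simp
  ring

lemma IsHermitian.inv_two_smul_smul_one_add [DecidableEq n] {H : Matrix n n ℂ}
    (hH : H.IsHermitian) (e : ℝ) : ((2 * (e : ℂ))⁻¹ • ((e : ℂ) • 1 + H)).IsHermitian := by
  have hr : ∀ r : ℝ, IsSelfAdjoint (r : ℂ) := Complex.conj_ofReal
  exact ((isHermitian_one.smul (hr e)).add hH).smul (by simpa using hr (2 * e)⁻¹)

lemma mulVec_eq_zero_of_one_sub_mulVec_eq {R : Type*} [Ring R] [Fintype n] [DecidableEq n]
    {P : Matrix n n R} (hP : IsIdempotentElem P) {y : n → R} (hy : (1 - P) *ᵥ y = y) :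
    P *ᵥ y = 0 := by
  rw [← hy, mulVec_mulVec, hP.mul_one_sub_self, zero_mulVec]

variable {𝕜 : Type*} [RCLike 𝕜]

lemma inner_toLp_eq_zero_of_mulVec [Fintype n] {P : Matrix n n 𝕜} (hP : P.IsHermitian)
    {x y : n → 𝕜} (hx : P *ᵥ x = x) (hy : P *ᵥ y = 0) :
    inner 𝕜 (WithLp.toLp 2 x : EuclideanSpace 𝕜 n) (WithLp.toLp 2 y) = 0 := by
  rw [EuclideanSpace.inner_toLp_toLp, ← hx, star_mulVec, hP.eq, dotProduct_comm,
    ← dotProduct_mulVec, hy, dotProduct_zero]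

lemma norm_toLp_add_sq_of_mulVec [Fintype n] {P : Matrix n n 𝕜} (hP : P.IsHermitian)
    {x y : n → 𝕜} (hx : P *ᵥ x = x) (hy : P *ᵥ y = 0) :
    ‖(WithLp.toLp 2 (x + y) : EuclideanSpace 𝕜 n)‖ ^ 2 =
      ‖(WithLp.toLp 2 x : EuclideanSpace 𝕜 n)‖ ^ 2 +
        ‖(WithLp.toLp 2 y : EuclideanSpace 𝕜 n)‖ ^ 2 := by
  simpa only [sq, WithLp.toLp_add] using
    norm_add_sq_eq_norm_sq_add_norm_sq_of_inner_eq_zero _ _ (inner_toLp_eq_zero_of_mulVec hP hx hy)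

lemma norm_toLp_mulVec_sq_add_norm_toLp_one_sub_mulVec_sq [Fintype n] [DecidableEq n]
    {P : Matrix n n 𝕜} (hP : P.IsHermitian) (hPP : IsIdempotentElem P) (v : n → 𝕜) :
    ‖(WithLp.toLp 2 (P *ᵥ v) : EuclideanSpace 𝕜 n)‖ ^ 2 +
        ‖(WithLp.toLp 2 ((1 - P) *ᵥ v) : EuclideanSpace 𝕜 n)‖ ^ 2 =
      ‖(WithLp.toLp 2 v : EuclideanSpace 𝕜 n)‖ ^ 2 := by
  rw [← norm_toLp_add_sq_of_mulVec hP (by rw [mulVec_mulVec, hPP.eq])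
    (mulVec_eq_zero_of_one_sub_mulVec_eq hPP (by rw [mulVec_mulVec, hPP.one_sub.eq])),
    ← add_mulVec, add_sub_cancel, one_mulVec]

end Matrix

lemma memLp_two_iff_integrable_norm_toLp_sq {α ι E : Type*} [MeasurableSpace α] {μ : Measure α}
    [Fintype ι] [NormedAddCommGroup E] {f : α → ι → E} (hf : AEStronglyMeasurable f μ) :
    MemLp f 2 μ ↔ Integrable (fun a => ‖(WithLp.toLp 2 (f a) : PiLp 2 fun _ : ι => E)‖ ^ 2) μ := by
  rw [← memLp_two_iff_integrable_sq_norm, memLp_piLp_iff, memLp_pi_iff]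
  exact (PiLp.continuous_toLp 2 _).comp_aestronglyMeasurable hf

lemma enorm4_eq_norm_toLp (x : Fin 4 → ℂ) :
    enorm4 x = ‖(WithLp.toLp 2 x : EuclideanSpace ℂ (Fin 4))‖ := by
  rw [EuclideanSpace.norm_eq]; rfl

lemma Efun_pos {m : ℝ} (hm : 0 < m) (q : Fin 3 → ℝ) : 0 < Efun m q :=
  Real.sqrt_pos.2 (by positivity)

lemma Efun_sq (m : ℝ) (q : Fin 3 → ℝ) : Efun m q ^ 2 = ∑ i, q i ^ 2 + m ^ 2 :=
  Real.sq_sqrt (by positivity)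

lemma continuous_Efun (m : ℝ) : Continuous (Efun m) := by
  unfold Efun; fun_prop

def diracHam (m : ℝ) (q : Fin 3 → ℝ) : Matrix (Fin 4) (Fin 4) ℂ :=
  (q 0 : ℂ) • (γ0 * γ1) + (q 1 : ℂ) • (γ0 * γ2) + (q 2 : ℂ) • (γ0 * γ3) + (m : ℂ) • γ0

lemma cv4_cons (e : ℝ) (q : Fin 3 → ℝ) : cv4 (Fin.cons e q) = ![(e : ℂ), q 0, q 1, q 2] := by
  ext i; fin_cases i <;> rfl

lemma slash_cons_add_smul_one_mul_γ0 (m e : ℝ) (q : Fin 3 → ℝ) :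
    (slash (cv4 (Fin.cons e q)) + (m : ℂ) • 1) * γ0 = (e : ℂ) • 1 + diracHam m q := by
  ext i j
  fin_cases i <;> fin_cases j <;>
    simp [slash, cv4_cons, diracHam, γ0, γ1, γ2, γ3, mul_apply, Fin.sum_univ_four, one_apply] <;>
    ring

lemma diracHam_mul_self (m : ℝ) (q : Fin 3 → ℝ) :
    diracHam m q * diracHam m q = (Efun m q : ℂ) ^ 2 • 1 := by
  rw [← Complex.ofReal_pow, Efun_sq]
  ext i j
  fin_cases i <;> fin_cases j <;>
    simp [diracHam, γ0, γ1, γ2, γ3, mul_apply, Fin.sum_univ_four, Fin.sum_univ_three] <;>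
    ring_nf <;> simp [Complex.I_sq]

lemma diracHam_isHermitian (m : ℝ) (q : Fin 3 → ℝ) : (diracHam m q).IsHermitian := by
  ext i j
  fin_cases i <;> fin_cases j <;> simp [diracHam, γ0, γ1, γ2, γ3, Complex.conj_ofReal]

lemma Pplus_eq (m : ℝ) (q : Fin 3 → ℝ) :
    Pplus m q = (2 * (Efun m q : ℂ))⁻¹ • ((Efun m q : ℂ) • 1 + diracHam m q) := by
  rw [Pplus, pPlus, slash_cons_add_smul_one_mul_γ0]

lemma one_sub_Pplus {m : ℝ} (hm : 0 < m) (q : Fin 3 → ℝ) : 1 - Pplus m q = Pminus m q := by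
  rw [Pplus_eq, one_sub_inv_two_smul_smul_one_add _ (Efun_pos hm q).ne', Pminus, pMinus,
    slash_cons_add_smul_one_mul_γ0]
  push_cast
  module

lemma isIdempotentElem_Pplus {m : ℝ} (hm : 0 < m) (q : Fin 3 → ℝ) :
    IsIdempotentElem (Pplus m q) := by
  rw [Pplus_eq]
  exact isIdempotentElem_inv_two_smul_smul_one_add (Efun_pos hm q).ne' (diracHam_mul_self m q)

lemma isHermitian_Pplus (m : ℝ) (q : Fin 3 → ℝ) : (Pplus m q).IsHermitian := by
  rw [Pplus_eq]
  exact (diracHam_isHermitian m q).inv_two_smul_smul_one_add _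

lemma Pplus_add_Pminus {m : ℝ} (hm : 0 < m) (q : Fin 3 → ℝ) : Pplus m q + Pminus m q = 1 := by
  rw [← one_sub_Pplus hm, add_sub_cancel]

lemma Pplus_mul_Pminus {m : ℝ} (hm : 0 < m) (q : Fin 3 → ℝ) : Pplus m q * Pminus m q = 0 := by
  rw [← one_sub_Pplus hm]
  exact (isIdempotentElem_Pplus hm q).mul_one_sub_self

def F3M (m : ℝ) (q : Fin 3 → ℝ) (x y : Fin 4 → ℂ) : Fin 4 → ℂ := (m / Efun m q) • (x - y)

def FM3 (m : ℝ) (q : Fin 3 → ℝ) (v : Fin 4 → ℂ) : (Fin 4 → ℂ) × (Fin 4 → ℂ) :=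
  ((Efun m q / m) • (Pplus m q *ᵥ v), -((Efun m q / m) • (Pminus m q *ᵥ v)))

section Fibre

variable {m : ℝ} (hm : 0 < m) (q : Fin 3 → ℝ)
include hm

lemma Efun_div_mul_div_Efun : Efun m q / m * (m / Efun m q) = 1 := by
  have := (Efun_pos hm q).ne'
  field_simp

lemma Pplus_mulVec_FM3_fst (v : Fin 4 → ℂ) : Pplus m q *ᵥ (FM3 m q v).1 = (FM3 m q v).1 := by
  rw [FM3, mulVec_smul, mulVec_mulVec, (isIdempotentElem_Pplus hm q).eq]

lemma Pminus_mulVec_FM3_snd (v : Fin 4 → ℂ) : Pminus m q *ᵥ (FM3 m q v).2 = (FM3 m q v).2 := by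
  rw [FM3, mulVec_neg, mulVec_smul, mulVec_mulVec, ← one_sub_Pplus hm,
    (isIdempotentElem_Pplus hm q).one_sub.eq]

lemma F3M_FM3 (v : Fin 4 → ℂ) : F3M m q (FM3 m q v).1 (FM3 m q v).2 = v := by
  rw [F3M, FM3, sub_neg_eq_add, ← smul_add, ← add_mulVec, Pplus_add_Pminus hm, one_mulVec,
    smul_smul, mul_comm, Efun_div_mul_div_Efun hm, one_smul]

lemma enorm4_FM3_sq (v : Fin 4 → ℂ) :
    (enorm4 (FM3 m q v).1 ^ 2 + enorm4 (FM3 m q v).2 ^ 2) / Efun m q ^ 2 =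
      enorm4 v ^ 2 / m ^ 2 := by
  simp only [FM3, enorm4_eq_norm_toLp, WithLp.toLp_smul, WithLp.toLp_neg, norm_neg, norm_smul,
    Real.norm_eq_abs, mul_pow, sq_abs, ← mul_add, ← one_sub_Pplus hm,
    norm_toLp_mulVec_sq_add_norm_toLp_one_sub_mulVec_sq (isHermitian_Pplus m q)
      (isIdempotentElem_Pplus hm q)]
  have := (Efun_pos hm q).ne'
  field_simp

variable {q} {x y : Fin 4 → ℂ}

lemma Pplus_mulVec_eq_zero_of_Pminus_mulVec_eq (hy : Pminus m q *ᵥ y = y) :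
    Pplus m q *ᵥ y = 0 :=
  mulVec_eq_zero_of_one_sub_mulVec_eq (isIdempotentElem_Pplus hm q) (by rwa [one_sub_Pplus hm])

lemma FM3_F3M (hx : Pplus m q *ᵥ x = x) (hy : Pminus m q *ᵥ y = y) :
    FM3 m q (F3M m q x y) = (x, y) := by
  have hPxy : Pplus m q *ᵥ (x - y) = x := by
    rw [mulVec_sub, hx, Pplus_mulVec_eq_zero_of_Pminus_mulVec_eq hm hy, sub_zero]
  have hQxy : Pminus m q *ᵥ (x - y) = -y := by
    rw [← one_sub_Pplus hm, sub_mulVec, one_mulVec, hPxy, sub_sub_cancel_left]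
  simp only [FM3, F3M, mulVec_smul, hPxy, hQxy, smul_neg, neg_neg, smul_smul,
    Efun_div_mul_div_Efun hm, one_smul]

lemma enorm4_F3M_sq (hx : Pplus m q *ᵥ x = x) (hy : Pminus m q *ᵥ y = y) :
    enorm4 (F3M m q x y) ^ 2 = m ^ 2 * ((enorm4 x ^ 2 + enorm4 y ^ 2) / Efun m q ^ 2) := by
  have hy' : Pplus m q *ᵥ (-y) = 0 := by
    rw [mulVec_neg, Pplus_mulVec_eq_zero_of_Pminus_mulVec_eq hm hy, neg_zero]
  simp only [F3M, enorm4_eq_norm_toLp, WithLp.toLp_smul, norm_smul, Real.norm_eq_abs, mul_pow,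
    sq_abs, sub_eq_add_neg, norm_toLp_add_sq_of_mulVec (isHermitian_Pplus m q) hx hy',
    WithLp.toLp_neg, norm_neg]
  have := (Efun_pos hm q).ne'
  field_simp

end Fibre

/-- `F_{3M} : H_M → L²(ℝ³,ℂ⁴)`, `(ψ₊,ψ₋) ↦ (p⃗ ↦ m(ψ₊(p⃗)-ψ₋(p⃗))/E(p⃗))`, is a unitary
isomorphism from the Hilbert space of pairs of square-integrable (w.r.t. the weight
`m²/E²`) sections of the upper/lower Dirac bundles onto `L²(ℝ³,ℂ⁴)`, with inverse
`F_{M3} : φ ↦ ((E/m)P₊φ, -(E/m)P₋φ)`; moreover `P₊ + P₋ = 1` and `P₊P₋ = 0`. -/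
theorem F3M_unitary (m : ℝ) (hm : 0 < m) :
    (∀ q : Fin 3 → ℝ, Pplus m q + Pminus m q = 1 ∧ Pplus m q * Pminus m q = 0) ∧
    (∀ ψp ψm : (Fin 3 → ℝ) → Fin 4 → ℂ, Measurable ψp → Measurable ψm →
      (∀ᵐ q ∂(volume : Measure (Fin 3 → ℝ)), Pplus m q *ᵥ ψp q = ψp q) →
      (∀ᵐ q ∂(volume : Measure (Fin 3 → ℝ)), Pminus m q *ᵥ ψm q = ψm q) →
      Integrable (fun q : Fin 3 → ℝ =>
        (enorm4 (ψp q) ^ 2 + enorm4 (ψm q) ^ 2) / Efun m q ^ 2) →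
      (MemLp (fun q => (m / Efun m q) • (ψp q - ψm q)) 2 (volume : Measure (Fin 3 → ℝ)) ∧
        ∫ q : Fin 3 → ℝ, enorm4 ((m / Efun m q) • (ψp q - ψm q)) ^ 2 =
          m ^ 2 * ∫ q : Fin 3 → ℝ,
            (enorm4 (ψp q) ^ 2 + enorm4 (ψm q) ^ 2) / Efun m q ^ 2) ∧
      (∀ᵐ q ∂(volume : Measure (Fin 3 → ℝ)),
        (Efun m q / m) • (Pplus m q *ᵥ ((m / Efun m q) • (ψp q - ψm q))) = ψp q ∧
        -((Efun m q / m) • (Pminus m q *ᵥ ((m / Efun m q) • (ψp q - ψm q)))) = ψm q)) ∧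
    (∀ φ : (Fin 3 → ℝ) → Fin 4 → ℂ, Measurable φ →
      MemLp φ 2 (volume : Measure (Fin 3 → ℝ)) →
      (∀ q, Pplus m q *ᵥ ((Efun m q / m) • (Pplus m q *ᵥ φ q)) =
        (Efun m q / m) • (Pplus m q *ᵥ φ q)) ∧
      (∀ q, Pminus m q *ᵥ (-((Efun m q / m) • (Pminus m q *ᵥ φ q))) =
        -((Efun m q / m) • (Pminus m q *ᵥ φ q))) ∧
      Integrable (fun q : Fin 3 → ℝ =>
        (enorm4 ((Efun m q / m) • (Pplus m q *ᵥ φ q)) ^ 2 +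
          enorm4 (-((Efun m q / m) • (Pminus m q *ᵥ φ q))) ^ 2) / Efun m q ^ 2) ∧
      (∀ q, (m / Efun m q) •
          ((Efun m q / m) • (Pplus m q *ᵥ φ q) - -((Efun m q / m) • (Pminus m q *ᵥ φ q)))
        = φ q)) := by
  refine ⟨fun q => ⟨Pplus_add_Pminus hm q, Pplus_mul_Pminus hm q⟩, ?_, ?_⟩
  · intro ψp ψm hψp hψm hp hm' hint
    have hnorm : ∀ᵐ q ∂(volume : Measure (Fin 3 → ℝ)), enorm4 (F3M m q (ψp q) (ψm q)) ^ 2 =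
        m ^ 2 * ((enorm4 (ψp q) ^ 2 + enorm4 (ψm q) ^ 2) / Efun m q ^ 2) := by
      filter_upwards [hp, hm'] with q hx hy using enorm4_F3M_sq hm hx hy
    have hmeas : AEStronglyMeasurable (fun q => F3M m q (ψp q) (ψm q)) volume :=
      (((continuous_Efun m).measurable.const_div m).smul (hψp.sub hψm)).aestronglyMeasurable
    refine ⟨⟨(memLp_two_iff_integrable_norm_toLp_sq hmeas).2 ?_, ?_⟩, ?_⟩
    · simp_rw [← enorm4_eq_norm_toLp]
      exact (hint.const_mul _).congr (hnorm.mono fun _ h => h.symm)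
    · rw [← integral_const_mul]
      exact integral_congr_ae hnorm
    · filter_upwards [hp, hm'] with q hx hy using Prod.ext_iff.1 (FM3_F3M hm hx hy)
  · intro φ hφ hφ2
    refine ⟨fun q => Pplus_mulVec_FM3_fst hm q (φ q), fun q => Pminus_mulVec_FM3_snd hm q (φ q),
      ?_, fun q => F3M_FM3 hm q (φ q)⟩
    have hφ2 := (memLp_two_iff_integrable_norm_toLp_sq hφ.aestronglyMeasurable).1 hφ2
    simp_rw [← enorm4_eq_norm_toLp] at hφ2
    exact (hφ2.div_const _).congr (.of_forall fun q => (enorm4_FM3_sq hm q (φ q)).symm)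
end
end
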